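/- arXiv:1705.05675 — 2 statements merged into one kernel-verified Lean document; each statement's English description precedes it below -/
import Mathlib

section
/- For all natural numbers a, b, c, m, p, we have ∑_{k=0}^{a} C(a,k)·C(b,m+k)·C(k,c)·C(p−k, a+b−c) = C(m+p−b, m+a)·C(p−a, b−m−c)·C(a,c). -/
/-!
Writing `C(a,k) C(k,c) = C(a,c) C(a-c,k-c)` and shifting `k = c + j` reduces the identity to
the case `c = 0`. There, expand `C(q-j,n+b)` by Vandermonde along `q - j = (n - j) + (q - n)`,
trade `C(n,j) C(n-j,i)` for `C(n,i) C(n-i,j)` and sum over `j` by Vandermonde; the product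
`C(q-n,n+b-i) C(n+b-i,b-s)` becomes `C(q-n,b-s) C(q-n-b+s,n+s-i)`, and a last Vandermonde
summation over `i` gives the right-hand side.
-/

/-- Binomial coefficient for integers: `C x y` is the usual binomial coefficient
when `0 ≤ y ≤ x`, and `0` otherwise. -/
def C (x y : ℤ) : ℤ := if 0 ≤ y ∧ y ≤ x then (x.toNat.choose y.toNat : ℤ) else 0

open Finset

theorem C_eq_zero_of_neg {x y : ℤ} (hy : y < 0) : C x y = 0 := if_neg (by omega)

theorem C_eq_zero_of_lt {x y : ℤ} (hxy : x < y) : C x y = 0 := if_neg (by omega)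

theorem C_natCast (n k : ℕ) : C n k = n.choose k := by
  unfold C
  split_ifs with h
  · simp
  · rw [Nat.choose_eq_zero_of_lt (by omega), Nat.cast_zero]

theorem C_symm (x y : ℤ) : C x y = C x (x - y) := by
  by_cases h : 0 ≤ y ∧ y ≤ x
  · lift y to ℕ using h.1
    lift x to ℕ using (by omega)
    have hyx : y ≤ x := by omega
    rw [← Nat.cast_sub hyx, C_natCast, C_natCast, Nat.choose_symm hyx]
  · simp only [C, if_neg h, if_neg (show ¬(0 ≤ x - y ∧ x - y ≤ x) by omega)]

theorem C_mul (x y z : ℤ) : C x y * C y z = C x z * C (x - z) (y - z) := by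
  by_cases h : 0 ≤ z ∧ z ≤ y ∧ y ≤ x
  · obtain ⟨hz, hzy, hyx⟩ := h
    lift z to ℕ using hz
    lift y to ℕ using (by omega)
    lift x to ℕ using (by omega)
    rw [← Nat.cast_sub (by omega : z ≤ x), ← Nat.cast_sub (by omega : z ≤ y)]
    simp only [C_natCast]
    exact_mod_cast Nat.choose_mul (by omega)
  · rcases (by omega : z < 0 ∨ y < z ∨ x < y) with h | h | h
    · rw [C_eq_zero_of_neg h, C_eq_zero_of_neg h, zero_mul, mul_zero]
    · rw [C_eq_zero_of_lt h, C_eq_zero_of_neg (by omega : y - z < 0), mul_zero, mul_zero]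
    · rw [C_eq_zero_of_lt h, C_eq_zero_of_lt (by omega : x - z < y - z), zero_mul, mul_zero]

theorem C_mul_C_sub_comm (x i j : ℤ) : C x j * C (x - j) i = C x i * C (x - i) j := by
  have hi := C_mul x (i + j) i
  have hj := C_mul x (i + j) j
  rw [add_sub_cancel_left] at hi
  rw [add_sub_cancel_right] at hj
  rw [← hi, ← hj, C_symm (i + j) j, add_sub_cancel_right]

theorem C_add_eq_sum (x y t : ℤ) (N : ℕ) (hx : 0 ≤ x) (hxN : x ≤ N) (hy : 0 ≤ y) :
    C (x + y) t = ∑ i ∈ range (N + 1), C x i * C y (t - i) := by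
  lift x to ℕ using hx
  lift y to ℕ using hy
  rcases lt_or_ge t 0 with ht | ht
  · rw [C_eq_zero_of_neg ht]
    exact (sum_eq_zero fun i _ => by rw [C_eq_zero_of_neg (by omega : t - i < 0), mul_zero]).symm
  lift t to ℕ using ht
  have hvanish : ∀ i ≥ min x t + 1, C x i * C y (t - i) = 0 := by
    intro i hi
    rcases (by omega : x < i ∨ t < i) with h | h
    · rw [C_eq_zero_of_lt (by exact_mod_cast h), zero_mul]
    · rw [C_eq_zero_of_neg (by omega : (t : ℤ) - i < 0), mul_zero]
  rw [eventually_constant_sum hvanish (by omega),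
    ← eventually_constant_sum hvanish (n := t + 1) (by omega), ← Nat.cast_add, C_natCast,
    Nat.add_choose_eq, Nat.sum_antidiagonal_eq_sum_range_succ (fun i j => x.choose i * y.choose j)]
  push_cast
  refine sum_congr rfl fun i hi => ?_
  rw [← Nat.cast_sub (by simpa [Nat.lt_succ_iff] using hi), C_natCast, C_natCast]

theorem sum_C_mul_C_add_mul_C_sub (n b : ℕ) (s q : ℤ) :
    ∑ j ∈ range (n + 1), C n j * C b (s + j) * C (q - j) (n + b) =
      C (q + s - b) (n + s) * C (q - n) (b - s) := by
  rcases lt_or_ge q n with hq | hq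
  · rw [C_eq_zero_of_lt (by omega : q + s - b < n + s), zero_mul]
    exact sum_eq_zero fun j _ => by rw [C_eq_zero_of_lt (by omega : q - j < n + b), mul_zero]
  calc ∑ j ∈ range (n + 1), C n j * C b (s + j) * C (q - j) (n + b)
      = ∑ j ∈ range (n + 1), ∑ i ∈ range (n + 1),
          C n j * C (n - j) i * C b (b - s - j) * C (q - n) (n + b - i) := by
        refine sum_congr rfl fun j hj => ?_
        have hj : j ≤ n := Nat.lt_succ_iff.1 (mem_range.1 hj)
        rw [show q - j = (n - j) + (q - n) by ring,
          C_add_eq_sum (n - j) (q - n) (n + b) n (by omega) (by omega) (by omega), mul_sum,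
          C_symm b, show (b : ℤ) - (s + j) = b - s - j by ring]
        exact sum_congr rfl fun i _ => by ring
    _ = ∑ i ∈ range (n + 1), C n i * (C (q - n) (n + b - i) *
          ∑ j ∈ range (n + 1), C (n - i) j * C b (b - s - j)) := by
        rw [sum_comm]
        refine sum_congr rfl fun i _ => ?_
        rw [mul_sum, mul_sum]
        refine sum_congr rfl fun j _ => ?_
        rw [C_mul_C_sub_comm]
        ring
    _ = ∑ i ∈ range (n + 1), C n i * (C (q - n) (b - s) * C (q - n - b + s) (n + s - i)) := by
        refine sum_congr rfl fun i hi => ?_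
        have hi : i ≤ n := Nat.lt_succ_iff.1 (mem_range.1 hi)
        rw [← C_add_eq_sum (n - i) b (b - s) n (by omega) (by omega) (by omega),
          show n - i + b = (n : ℤ) + b - i by ring, C_mul,
          show q - n - (b - s) = q - n - b + s by ring,
          show (n : ℤ) + b - i - (b - s) = n + s - i by ring]
    _ = C (q + s - b) (n + s) * C (q - n) (b - s) := by
        rcases lt_or_ge (q - n - b + s) 0 with h | h
        · rw [C_eq_zero_of_lt (by omega : q - n < b - s)]
          simp
        rw [show q + s - b = n + (q - n - b + s) by ring,
          C_add_eq_sum n (q - n - b + s) (n + s) n (by omega) le_rfl h, sum_mul]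
        exact sum_congr rfl fun i _ => by ring

theorem sum_C_mul_C_mul (a c : ℕ) (f : ℕ → ℤ) :
    ∑ k ∈ range (a + 1), C a k * C k c * f k =
      C a c * ∑ j ∈ range (a - c + 1), C ↑(a - c) j * f (c + j) := by
  rcases lt_or_ge a c with hac | hca
  · rw [C_eq_zero_of_lt (by exact_mod_cast hac : (a : ℤ) < c), zero_mul]
    exact sum_eq_zero fun k hk => by
      rw [C_eq_zero_of_lt (by rw [mem_range] at hk; omega : (k : ℤ) < c), mul_zero, zero_mul]
  obtain ⟨n, rfl⟩ := Nat.exists_eq_add_of_le hca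
  have hbelow : ∀ k ∈ range c, C ↑(c + n) k * C k c * f k = 0 := fun k hk => by
    rw [C_eq_zero_of_lt (by simpa using hk : (k : ℤ) < c), mul_zero, zero_mul]
  rw [Nat.add_sub_cancel_left, add_assoc, sum_range_add, sum_eq_zero hbelow, zero_add, mul_sum]
  refine sum_congr rfl fun j _ => ?_
  rw [C_mul]
  push_cast
  rw [add_sub_cancel_left, add_sub_cancel_left, mul_assoc]

theorem stmt_15 (a b c m p : ℕ) :
    ∑ k ∈ Finset.range (a + 1), C a k * C b ((m : ℤ) + k) * C k c * C ((p : ℤ) - k) ((a : ℤ) + b - c) = C ((m : ℤ) + p - b) ((m : ℤ) + a) * C ((p : ℤ) - a) ((b : ℤ) - m - c) * C a c := by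
  have hfactor : ∀ k ∈ range (a + 1), C a k * C b (m + k) * C k c * C (p - k) (a + b - c)
      = C a k * C k c * (C b (m + k) * C (p - k) (a + b - c)) := fun k _ => by ring
  rw [sum_congr rfl hfactor, sum_C_mul_C_mul, mul_comm]
  rcases lt_or_ge a c with hac | hca
  · rw [C_eq_zero_of_lt (by exact_mod_cast hac : (a : ℤ) < c), mul_zero, mul_zero]
  obtain ⟨n, rfl⟩ := Nat.exists_eq_add_of_le hca
  have hshift : ∀ j ∈ range (n + 1),
      C n j * (C b (m + ↑(c + j)) * C (p - ↑(c + j)) (↑(c + n) + b - c))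
        = C n j * C b ((m + c : ℤ) + j) * C ((p - c : ℤ) - j) (n + b) := fun j _ => by
    push_cast
    ring_nf
  rw [Nat.add_sub_cancel_left, sum_congr rfl hshift, sum_C_mul_C_add_mul_C_sub]
  push_cast
  congr 2 <;> congr 1 <;> ring
end

section
/- (Bizley's second identity) For all natural numbers a, b, n, p, we have ∑_{k=0}^{n} C(a,k)·C(b, n−k)·C(p+k, a+b) = C(p, a+b−n)·C(p−b+n, n). -/
open Finset

/-! Expand `C(p+k, a+b) = ∑ⱼ C(k,j) C(p, a+b-j)` by Vandermonde and exchange the sums. The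
subset identity `C(a,k) C(k,j) = C(a,j) C(a-j, k-j)` and Vandermonde again collapse the sum over
`k` to `C(a,j) C(a+b-j, n-j)`. Trinomial revision rewrites `C(p, a+b-j) C(a+b-j, n-j)` as
`C(p, a+b-n) C(p-a-b+n, n-j)`, and a last Vandermonde sum over `j` gives `C(p-b+n, n)`; when
`p + n < a + b` the factor `C(p, a+b-n)` vanishes. -/

lemma C_natCast_s19 (x y : ℕ) : C x y = x.choose y := by
  unfold C
  rcases le_or_gt y x with h | h
  · rw [if_pos ⟨Int.natCast_nonneg y, by exact_mod_cast h⟩]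
    simp
  · rw [if_neg (by omega), Nat.choose_eq_zero_of_lt h, Nat.cast_zero]

lemma C_of_neg {x y : ℤ} (h : y < 0) : C x y = 0 :=
  if_neg fun h' => (not_le.mpr h) h'.1

lemma C_of_lt {x y : ℤ} (h : x < y) : C x y = 0 :=
  if_neg fun h' => (not_le.mpr h) h'.2

lemma C_mul_s19 (A K J : ℤ) : C A K * C K J = C A J * C (A - J) (K - J) := by
  rcases lt_or_ge J 0 with hJ | hJ
  · rw [C_of_neg hJ, C_of_neg hJ]; ring
  rcases lt_or_ge K J with hKJ | hKJ
  · rw [C_of_lt hKJ, C_of_neg (show K - J < 0 by omega)]; ring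
  rcases lt_or_ge A K with hAK | hAK
  · rw [C_of_lt hAK, C_of_lt (show A - J < K - J by omega)]; ring
  obtain ⟨j, rfl⟩ := Int.eq_ofNat_of_zero_le hJ
  obtain ⟨k, rfl⟩ := Int.eq_ofNat_of_zero_le (hJ.trans hKJ)
  obtain ⟨a, rfl⟩ := Int.eq_ofNat_of_zero_le (hJ.trans (hKJ.trans hAK))
  rw [← Nat.cast_sub (by omega), ← Nat.cast_sub (by omega), C_natCast_s19, C_natCast_s19, C_natCast_s19,
    C_natCast_s19]
  exact_mod_cast Nat.choose_mul (by omega)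

lemma C_symm_s19 {M R : ℤ} (h0 : 0 ≤ R) (h1 : R ≤ M) : C M R = C M (M - R) := by
  obtain ⟨r, rfl⟩ := Int.eq_ofNat_of_zero_le h0
  obtain ⟨m, rfl⟩ := Int.eq_ofNat_of_zero_le (h0.trans h1)
  rw [← Nat.cast_sub (by omega), C_natCast_s19, C_natCast_s19, Nat.choose_symm (by omega)]

lemma C_mul_C_sub (P M R : ℤ) : C P M * C M R = C P (M - R) * C (P - M + R) R := by
  rcases lt_or_ge R 0 with h | h
  · rw [C_of_neg h, C_of_neg h]; ring
  rcases lt_or_ge M R with h2 | h2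
  · rw [C_of_lt h2, C_of_neg (show M - R < 0 by omega)]; ring
  rw [C_symm_s19 h h2, C_mul_s19, sub_sub_cancel, sub_sub_eq_add_sub, add_sub_right_comm]

lemma C_add_eq_sum_range (x y d : ℕ) :
    C (x + y) d = ∑ i ∈ range (d + 1), C x i * C y ((d : ℤ) - i) := by
  rw [← Nat.cast_add, C_natCast_s19, Nat.add_choose_eq, Nat.sum_antidiagonal_eq_sum_range_succ_mk]
  push_cast
  refine sum_congr rfl fun i hi => ?_
  rw [← Nat.cast_sub (Nat.lt_succ_iff.mp (mem_range.mp hi)), C_natCast_s19, C_natCast_s19]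

lemma C_add_sub_eq_sum (x y j : ℕ) (m : ℤ) (s : Finset ℕ)
    (hs : ∀ k : ℕ, j ≤ k → k ≤ j + x → (k : ℤ) ≤ m → k ∈ s) :
    C (x + y) (m - j) = ∑ k ∈ s, C x ((k : ℤ) - j) * C y (m - k) := by
  rcases lt_or_ge m j with hm | hm
  · rw [C_of_neg (by omega)]
    refine (sum_eq_zero fun k _ => ?_).symm
    rcases lt_or_ge k j with hk | hk
    · exact mul_eq_zero_of_left (C_of_neg (by omega)) _
    · exact mul_eq_zero_of_right _ (C_of_neg (by omega))
  obtain ⟨d, rfl⟩ : ∃ d : ℕ, m = j + d := ⟨(m - j).toNat, by omega⟩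
  have hIco : ∑ k ∈ Ico j (j + d + 1), C x ((k : ℤ) - j) * C y ((j : ℤ) + d - k)
      = ∑ i ∈ range (d + 1), C x i * C y ((d : ℤ) - i) := by
    rw [sum_Ico_eq_sum_range, add_assoc, Nat.add_sub_cancel_left]
    refine sum_congr rfl fun i _ => ?_
    push_cast
    ring_nf
  rw [add_sub_cancel_left, C_add_eq_sum_range, ← hIco]
  refine sum_congr_of_eq_on_inter (fun k hk hks => ?_) (fun k hk hkI => ?_) fun _ _ _ => rfl
  · rw [mem_Ico] at hk
    rcases le_or_gt k (j + x) with hkx | hkx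
    · exact absurd (hs k hk.1 hkx (by omega)) hks
    · exact mul_eq_zero_of_left (C_of_lt (by omega)) _
  · rw [mem_Ico] at hkI
    rcases lt_or_ge k j with h | h
    · exact mul_eq_zero_of_left (C_of_neg (by omega)) _
    · exact mul_eq_zero_of_right _ (C_of_neg (by omega))

lemma C_add_eq_sum_s19 (x y : ℕ) (m : ℤ) (s : Finset ℕ)
    (hs : ∀ k : ℕ, k ≤ x → (k : ℤ) ≤ m → k ∈ s) :
    C (x + y) m = ∑ k ∈ s, C x k * C y (m - k) := by
  simpa using C_add_sub_eq_sum x y 0 m s fun k _ hkx hkm => hs k (by omega) hkm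

lemma sum_C_mul_C_mul_C (a b n j : ℕ) :
    ∑ k ∈ range (n + 1), C a k * C k j * C b ((n : ℤ) - k)
      = C a j * C ((a : ℤ) + b - j) ((n : ℤ) - j) := by
  simp_rw [C_mul_s19, mul_assoc, ← mul_sum]
  rcases lt_or_ge a j with h | h
  · rw [C_of_lt (by omega), zero_mul, zero_mul]
  rw [show (a : ℤ) + b - j = ((a - j : ℕ) : ℤ) + b by omega,
    C_add_sub_eq_sum (a - j) b j n (range (n + 1)) fun k _ _ hk => mem_range.mpr (by omega),
    Nat.cast_sub h]

theorem stmt_19 (a b n p : ℕ) :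
    ∑ k ∈ Finset.range (n + 1), C a k * C b ((n : ℤ) - k) * C ((p : ℤ) + k) ((a : ℤ) + b) = C p ((a : ℤ) + b - n) * C ((p : ℤ) - b + n) n := by
  have hexpand (k : ℕ) : C ((p : ℤ) + k) ((a : ℤ) + b)
      = ∑ j ∈ range (a + b + 1), C k j * C p ((a : ℤ) + b - j) := by
    rw [add_comm (p : ℤ)]
    exact C_add_eq_sum_s19 k p _ _ fun j _ hj => mem_range.mpr (by omega)
  have hrevise (j : ℕ) : C p ((a : ℤ) + b - j) * C ((a : ℤ) + b - j) ((n : ℤ) - j)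
      = C p ((a : ℤ) + b - n) * C ((p : ℤ) - a - b + n) ((n : ℤ) - j) := by
    rw [C_mul_C_sub]; ring_nf
  calc _ = ∑ j ∈ range (a + b + 1), C p ((a : ℤ) + b - j) *
          ∑ k ∈ range (n + 1), C a k * C k j * C b ((n : ℤ) - k) := by
        simp_rw [hexpand, mul_sum]
        rw [sum_comm]
        exact sum_congr rfl fun _ _ => sum_congr rfl fun _ _ => by ring
    _ = C p ((a : ℤ) + b - n) *
          ∑ j ∈ range (a + b + 1), C a j * C ((p : ℤ) - a - b + n) ((n : ℤ) - j) := by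
        simp_rw [sum_C_mul_C_mul_C, mul_left_comm (C p _), hrevise, mul_sum]
        exact sum_congr rfl fun _ _ => by ring
    _ = _ := by
      rcases le_or_gt (a + b) (p + n) with h | h
      · obtain ⟨q, hq⟩ : ∃ q : ℕ, (p : ℤ) - a - b + n = q := ⟨p + n - (a + b), by omega⟩
        rw [hq, show (p : ℤ) - b + n = a + q by omega,
          C_add_eq_sum_s19 a q n (range (a + b + 1)) fun k hk _ => mem_range.mpr (by omega)]
      · rw [C_of_lt (by omega), zero_mul, zero_mul]
end
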